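/- arXiv:2006.13286 — 4 statements merged into one kernel-verified Lean document; each statement's English description precedes it below -/
import Mathlib

section
/- Let H be exponential with rate 1/λ (mean λ > 0) and D be an independent random variable with density f_D(y) = (2/(α R₁²)) y^{2/α − 1} on [0, R₁^α]. Then the random variable g = H/D has probability density f_g(x) = (2 λ^{2/α}/(α R₁² x^{2/α + 1})) · γ(2/α + 1, R₁^α x/λ) for x > 0, where γ is the lower incomplete gamma function. -/
open MeasureTheory

/-- The lower incomplete gamma function `γ(a,b) = ∫₀ᵇ t^(a−1) e^(−t) dt`. -/
noncomputable def lowerGamma (a b : ℝ) : ℝ :=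
  ∫ t in Set.Ioc (0 : ℝ) b, t ^ (a - 1) * Real.exp (-t)

open Set Real
open scoped ENNReal

/-! The joint law of `(H, D)` is the product of the two densities, and for densities `f`, `g` on
`ℝ` the quotient of independent variables has density `x ↦ ∫ |y| f (y x) g y dy` (substitute
`h = y x` in the inner integral of Tonelli's theorem). For the exponential `f` and the power
density `g` on `[0, R₁^α]` this is a constant times `∫₀^{R₁^α} y^(2/α) e^(-x y / λ) dy`, which the
substitution `t = x y / λ` turns into `γ(2/α + 1, R₁^α x / λ)`. -/

theorem integrableOn_Ioc_rpow_mul_exp_neg_mul {a : ℝ} (ha : 0 < a) (b c : ℝ) :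
    IntegrableOn (fun y => y ^ (a - 1) * exp (-(c * y))) (Ioc 0 b) :=
  ((intervalIntegral.intervalIntegrable_rpow' (by linarith)).mul_continuousOn
    (by fun_prop)).def'.mono_set Ioc_subset_uIoc

theorem setIntegral_Ioc_rpow_mul_exp_neg_mul {a b c : ℝ} (hb : 0 ≤ b) (hc : 0 < c) :
    ∫ y in Ioc 0 b, y ^ (a - 1) * exp (-(c * y)) = lowerGamma a (c * b) / c ^ a := by
  have hscale : ∀ y ∈ uIcc 0 b,
      y ^ (a - 1) * exp (-(c * y)) = c ^ (1 - a) * ((c * y) ^ (a - 1) * exp (-(c * y))) := by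
    intro y hy
    rw [uIcc_of_le hb] at hy
    rw [mul_rpow hc.le hy.1, ← mul_assoc, ← mul_assoc, ← rpow_add hc]
    simp
  rw [← intervalIntegral.integral_of_le hb, intervalIntegral.integral_congr hscale,
    intervalIntegral.integral_const_mul,
    intervalIntegral.integral_comp_mul_left (fun t => t ^ (a - 1) * exp (-t)) hc.ne',
    mul_zero, intervalIntegral.integral_of_le (by positivity), lowerGamma, smul_eq_mul,
    ← mul_assoc, div_eq_inv_mul]
  congr 1
  rw [← rpow_neg_one, ← rpow_add hc, ← rpow_neg hc.le]
  ring_nf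

theorem Real.ofReal_abs_mul_lintegral_comp_mul_left {a : ℝ} (ha : a ≠ 0) (F : ℝ → ℝ≥0∞) :
    ENNReal.ofReal |a| * ∫⁻ x, F (a * x) = ∫⁻ x, F x := by
  have := lintegral_map_equiv F (MeasurableEquiv.mulLeft₀ a ha) (μ := volume)
  simp only [MeasurableEquiv.coe_mulLeft₀] at this
  rw [← this, Real.map_volume_mul_left ha, lintegral_smul_measure, smul_eq_mul, ← mul_assoc,
    ← ENNReal.ofReal_mul (abs_nonneg a), ← abs_mul, mul_inv_cancel₀ ha, abs_one,
    ENNReal.ofReal_one, one_mul]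

theorem map_div_prod_withDensity {f g : ℝ → ℝ≥0∞} (hf : Measurable f) (hg : Measurable g) :
    ((volume.withDensity f).prod (volume.withDensity g)).map (fun p : ℝ × ℝ => p.1 / p.2) =
      volume.withDensity (fun x => ∫⁻ y, ENNReal.ofReal |y| * f (y * x) * g y) := by
  have hdiv : Measurable (fun p : ℝ × ℝ => p.1 / p.2) := measurable_fst.div measurable_snd
  refine Measure.ext_of_lintegral _ fun φ hφ => ?_
  have hscale : ∀ᵐ y ∂volume, g y * ∫⁻ h, f h * φ (h / y) =
      ∫⁻ x, φ x * (ENNReal.ofReal |y| * f (y * x) * g y) := by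
    filter_upwards [volume.ae_ne 0] with y hy
    rw [← Real.ofReal_abs_mul_lintegral_comp_mul_left hy, ← lintegral_const_mul _ (by fun_prop),
      ← lintegral_const_mul _ (by fun_prop)]
    refine lintegral_congr fun x => ?_
    rw [mul_div_cancel_left₀ x hy]
    ring
  calc ∫⁻ x, φ x ∂(((volume.withDensity f).prod (volume.withDensity g)).map _)
      = ∫⁻ y, ∫⁻ h, φ (h / y) ∂volume.withDensity f ∂volume.withDensity g :=
        (lintegral_map hφ hdiv).trans (lintegral_prod_symm _ (hφ.comp hdiv).aemeasurable)
    _ = ∫⁻ y, g y * ∫⁻ h, f h * φ (h / y) := by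
        rw [lintegral_withDensity_eq_lintegral_mul _ hg (by fun_prop)]
        refine lintegral_congr fun y => ?_
        rw [Pi.mul_apply, lintegral_withDensity_eq_lintegral_mul _ hf (by fun_prop)]
        rfl
    _ = ∫⁻ y, ∫⁻ x, φ x * (ENNReal.ofReal |y| * f (y * x) * g y) := lintegral_congr_ae hscale
    _ = _ := by
        rw [lintegral_lintegral_swap (by fun_prop),
          lintegral_withDensity_eq_lintegral_mul _ (by fun_prop) hφ]
        refine lintegral_congr fun x => ?_
        rw [lintegral_const_mul _ (by fun_prop)]
        exact mul_comm _ _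

section ExponentialOverPower

variable {lam K r b x : ℝ}

theorem lintegral_ratio_density_of_nonpos (hx : x ≤ 0) :
    ∫⁻ y, ENNReal.ofReal |y| *
        ENNReal.ofReal ((Ioi 0).indicator (fun t => 1 / lam * exp (-t / lam)) (y * x)) *
        ENNReal.ofReal ((Icc 0 b).indicator (fun z => K * z ^ (r - 1)) y) = 0 := by
  refine (lintegral_congr fun y => ?_).trans lintegral_zero
  rcases lt_trichotomy y 0 with hy | rfl | hy
  · simp [indicator_of_notMem (fun h : y ∈ Icc 0 b => hy.not_ge h.1)]
  · simp
  · have : y * x ∉ Ioi 0 := (mul_nonpos_of_nonneg_of_nonpos hy.le hx).not_gt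
    simp [indicator_of_notMem this]

theorem lintegral_ratio_density_of_pos (hlam : 0 < lam) (hK : 0 ≤ K) (hr : -1 < r) (hb : 0 ≤ b)
    (hx : 0 < x) :
    ∫⁻ y, ENNReal.ofReal |y| *
        ENNReal.ofReal ((Ioi 0).indicator (fun t => 1 / lam * exp (-t / lam)) (y * x)) *
        ENNReal.ofReal ((Icc 0 b).indicator (fun z => K * z ^ (r - 1)) y) =
      ENNReal.ofReal (K / lam * (lowerGamma (r + 1) (b * x / lam) / (x / lam) ^ (r + 1))) := by
  have hc : 0 < x / lam := div_pos hx hlam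
  have hintegrand : ∀ y, ENNReal.ofReal |y| *
      ENNReal.ofReal ((Ioi 0).indicator (fun t => 1 / lam * exp (-t / lam)) (y * x)) *
      ENNReal.ofReal ((Icc 0 b).indicator (fun z => K * z ^ (r - 1)) y) =
      (Ioc 0 b).indicator
        (fun y => ENNReal.ofReal (K / lam * (y ^ (r + 1 - 1) * exp (-(x / lam * y))))) y := by
    intro y
    by_cases hy : y ∈ Ioc 0 b
    · rw [indicator_of_mem hy, indicator_of_mem (mem_Ioi.2 (mul_pos hy.1 hx)),
        indicator_of_mem (Ioc_subset_Icc_self hy), ← ENNReal.ofReal_mul (abs_nonneg y),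
        ← ENNReal.ofReal_mul (by positivity), abs_of_pos hy.1, add_sub_cancel_right,
        rpow_sub_one hy.1.ne']
      have hy0 : y ≠ 0 := hy.1.ne'
      congr 1
      field_simp
    · rw [indicator_of_notMem hy]
      by_cases hy0 : y = 0
      · simp [hy0]
      · have : y ∉ Icc 0 b := fun h => hy ⟨lt_of_le_of_ne h.1 (Ne.symm hy0), h.2⟩
        simp [indicator_of_notMem this]
  have hnonneg : 0 ≤ᵐ[volume.restrict (Ioc 0 b)]
      fun y => K / lam * (y ^ (r + 1 - 1) * exp (-(x / lam * y))) :=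
    (ae_restrict_iff' measurableSet_Ioc).2 (ae_of_all _ fun y hy => by
      have hy0 : 0 < y := hy.1
      positivity)
  rw [lintegral_congr hintegrand, lintegral_indicator measurableSet_Ioc,
    ← ofReal_integral_eq_lintegral_ofReal
      ((integrableOn_Ioc_rpow_mul_exp_neg_mul (by linarith) b _).const_mul _) hnonneg,
    integral_const_mul, setIntegral_Ioc_rpow_mul_exp_neg_mul hb hc,
    show x / lam * b = b * x / lam by ring]

end ExponentialOverPower

/-- If `H ~ Exp(1/λ)` (mean `λ`) and `D` is independent with density
`(2/(α R₁²)) y^(2/α − 1)` on `[0, R₁^α]`, then `g = H/D` has density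
`(2 λ^(2/α)/(α R₁² x^(2/α+1))) γ(2/α + 1, R₁^α x/λ)` for `x > 0`. -/
theorem ratio_pdf_near {Ω : Type*} [MeasurableSpace Ω]
    (ℙ : Measure Ω) [IsProbabilityMeasure ℙ]
    (R₁ α lam : ℝ) (hR₁ : 0 < R₁) (hα : 0 < α) (hlam : 0 < lam)
    (H D : Ω → ℝ) (hH : Measurable H) (hD : Measurable D)
    (hindep : ProbabilityTheory.IndepFun H D ℙ)
    (hHpdf : Measure.map H ℙ =
      (volume : Measure ℝ).withDensity (fun h =>
        ENNReal.ofReal (Set.indicator (Set.Ioi 0)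
          (fun t => (1 / lam) * Real.exp (-t / lam)) h)))
    (hDpdf : Measure.map D ℙ =
      (volume : Measure ℝ).withDensity (fun y =>
        ENNReal.ofReal (Set.indicator (Set.Icc 0 (R₁ ^ α))
          (fun z => 2 / (α * R₁ ^ 2) * z ^ (2 / α - 1)) y))) :
    Measure.map (fun ω => H ω / D ω) ℙ =
      (volume : Measure ℝ).withDensity (fun x =>
        ENNReal.ofReal (Set.indicator (Set.Ioi 0)
          (fun z => 2 * lam ^ (2 / α) / (α * R₁ ^ 2 * z ^ (2 / α + 1)) *
            lowerGamma (2 / α + 1) (R₁ ^ α * z / lam)) x)) := by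
  have hjoint : (ℙ.map H).prod (ℙ.map D) = ℙ.map (fun ω => (H ω, D ω)) :=
    ((ProbabilityTheory.indepFun_iff_map_prod_eq_prod_map_map hH.aemeasurable
      hD.aemeasurable).mp hindep).symm
  have hratio : ℙ.map (fun ω => H ω / D ω) =
      ((ℙ.map H).prod (ℙ.map D)).map (fun p : ℝ × ℝ => p.1 / p.2) := by
    rw [hjoint, Measure.map_map (by fun_prop : Measurable fun p : ℝ × ℝ => p.1 / p.2)
      (hH.prodMk hD)]
    rfl
  rw [hratio, hHpdf, hDpdf, map_div_prod_withDensity (by measurability) (by measurability)]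
  congr 1 with x
  rcases le_or_gt x 0 with hx | hx
  · rw [lintegral_ratio_density_of_nonpos hx, indicator_of_notMem (notMem_Ioi.2 hx),
      ENNReal.ofReal_zero]
  · rw [lintegral_ratio_density_of_pos hlam (by positivity) (by linarith [div_pos two_pos hα])
      (by positivity) hx, indicator_of_mem (mem_Ioi.2 hx)]
    congr 1
    rw [div_rpow hx.le hlam.le, rpow_add_one hlam.ne', rpow_add_one hx.ne']
    field_simp
end

section
/- Let H be exponential with rate 1/λ and D be independent with density f_D(y) = (2/(α(R₂² − R₁²))) y^{2/α − 1} on [R₁^α, R₂^α]. Then g = H/D has density f_g(x) = (2λ^{2/α}/(α(R₂² − R₁²) x^{2/α + 1})) · [γ(2/α + 1, R₂^α x/λ) − γ(2/α + 1, R₁^α x/λ)] for x > 0. -/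
/-!
Conditionally on `D = y ≠ 0`, the ratio `H / D` has density `x ↦ |y| f_H (x y)`; integrating
against `f_D` (Tonelli) gives the density `x ↦ ∫ f_D(y) |y| f_H(x y) dy` of `H / D`.
For the exponential and power densities at hand this is
`∫_{R₁^α}^{R₂^α} c y^(2/α) e^(-x y/λ) / λ dy`, and the substitution `u = x y / λ` turns it into a
difference of two lower incomplete gamma values.
-/

open MeasureTheory

open ENNReal

theorem withDensity_map_div_const {f : ℝ → ℝ≥0∞} (hf : Measurable f) {y : ℝ} (hy : y ≠ 0) :
    (volume.withDensity f).map (· / y) =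
      volume.withDensity (fun x => ENNReal.ofReal |y| * f (x * y)) := by
  have hdiv : Measurable (· / y : ℝ → ℝ) := measurable_div_const y
  ext s hs
  have hpre : (· * y) ⁻¹' ((· / y) ⁻¹' s) = s := by
    ext x; simp [mul_div_cancel_right₀ x hy]
  rw [Measure.map_apply hdiv hs, withDensity_apply _ (hdiv hs), withDensity_apply _ hs,
    lintegral_const_mul' _ _ ofReal_ne_top]
  conv_lhs => rw [← Real.smul_map_volume_mul_right hy]
  rw [Measure.restrict_smul, lintegral_smul_measure,
    setLIntegral_map (hdiv hs) hf (measurable_mul_const y), hpre]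
  rfl

theorem map_div_prod_withDensity_s5 {fX fY : ℝ → ℝ≥0∞} (hfX : Measurable fX) (hfY : Measurable fY) :
    ((volume.withDensity fX).prod (volume.withDensity fY)).map (fun q : ℝ × ℝ => q.1 / q.2) =
      volume.withDensity (fun x => ∫⁻ y, fY y * ENNReal.ofReal |y| * fX (x * y)) := by
  have hdiv : Measurable (fun q : ℝ × ℝ => q.1 / q.2) := measurable_fst.div measurable_snd
  ext s hs
  have hslice : ∀ y ≠ 0, volume.withDensity fX ((fun x => (x, y)) ⁻¹' ((fun q => q.1 / q.2) ⁻¹' s))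
      = ∫⁻ x in s, ENNReal.ofReal |y| * fX (x * y) := fun y hy => by
    rw [← withDensity_apply _ hs, ← withDensity_map_div_const hfX hy,
      Measure.map_apply (measurable_div_const y) hs]
    rfl
  rw [Measure.map_apply hdiv hs, Measure.prod_apply_symm (hdiv hs),
    lintegral_withDensity_eq_lintegral_mul _ hfY (measurable_measure_prodMk_right (hdiv hs)),
    withDensity_apply _ hs, ← lintegral_lintegral_swap (by fun_prop)]
  refine lintegral_congr_ae ((Measure.ae_ne volume 0).mono fun y hy => ?_)
  rw [Pi.mul_apply, hslice y hy, ← lintegral_const_mul _ (by fun_prop)]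
  simp only [mul_assoc]

theorem ProbabilityTheory.IndepFun.map_div_eq_withDensity {Ω : Type*} [MeasurableSpace Ω]
    {μ : Measure Ω} [IsFiniteMeasure μ] {X Y : Ω → ℝ} {fX fY : ℝ → ℝ≥0∞}
    (hXY : ProbabilityTheory.IndepFun X Y μ) (hX : AEMeasurable X μ) (hY : AEMeasurable Y μ)
    (hfX : Measurable fX) (hfY : Measurable fY)
    (hXpdf : μ.map X = volume.withDensity fX) (hYpdf : μ.map Y = volume.withDensity fY) :
    μ.map (fun ω => X ω / Y ω) =
      volume.withDensity (fun x => ∫⁻ y, fY y * ENNReal.ofReal |y| * fX (x * y)) := by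
  rw [← map_div_prod_withDensity_s5 hfX hfY, ← hXpdf, ← hYpdf,
    ← (ProbabilityTheory.indepFun_iff_map_prod_eq_prod_map_map hX hY).1 hXY,
    AEMeasurable.map_map_of_aemeasurable (by fun_prop) (hX.prodMk hY)]
  rfl

theorem lowerGamma_sub_lowerGamma {a b₁ b₂ : ℝ} (ha : 1 ≤ a) (hb₁ : 0 ≤ b₁) (hb₂ : 0 ≤ b₂) :
    lowerGamma a b₂ - lowerGamma a b₁ = ∫ t in b₁..b₂, t ^ (a - 1) * Real.exp (-t) := by
  have hint : ∀ b, IntervalIntegrable (fun t : ℝ => t ^ (a - 1) * Real.exp (-t)) volume 0 b :=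
    fun b => ((Real.continuous_rpow_const (by linarith)).mul
      (Real.continuous_exp.comp continuous_neg)).intervalIntegrable 0 b
  rw [lowerGamma, lowerGamma, ← intervalIntegral.integral_of_le hb₁,
    ← intervalIntegral.integral_of_le hb₂, 
    intervalIntegral.integral_interval_sub_left (hint _) (hint _)]

theorem intervalIntegral_rpow_mul_exp_neg_mul {a k A B : ℝ} (ha : 1 ≤ a) (hk : 0 < k)
    (hA : 0 ≤ A) (hB : 0 ≤ B) :
    ∫ y in A..B, y ^ (a - 1) * Real.exp (-(k * y)) =
      (k ^ a)⁻¹ * (lowerGamma a (k * B) - lowerGamma a (k * A)) := by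
  have hscale : ∫ y in A..B, (k * y) ^ (a - 1) * Real.exp (-(k * y)) =
      k ^ (a - 1) * ∫ y in A..B, y ^ (a - 1) * Real.exp (-(k * y)) := by
    rw [← intervalIntegral.integral_const_mul]
    refine intervalIntegral.integral_congr fun y hy => ?_
    have hy0 : 0 ≤ y := (le_min hA hB).trans hy.1
    rw [Real.mul_rpow hk.le hy0, mul_assoc]
  have hsubst := intervalIntegral.integral_comp_mul_left
    (fun u => u ^ (a - 1) * Real.exp (-u)) hk.ne' (a := A) (b := B)
  rw [hscale, smul_eq_mul, Real.rpow_sub_one hk.ne'] at hsubst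
  have hka : k ^ a ≠ 0 := by positivity
  rw [lowerGamma_sub_lowerGamma ha (by positivity) (by positivity)]
  field_simp at hsubst ⊢
  linear_combination hsubst

theorem lintegral_powerDensity_mul_expDensity {p lam A B c : ℝ} (hp : 0 ≤ p) (hlam : 0 < lam)
    (hA : 0 < A) (hAB : A ≤ B) (hc : 0 ≤ c) (t : ℝ) :
    ∫⁻ y, ENNReal.ofReal ((Set.Icc A B).indicator (fun z => c * z ^ (p - 1)) y) *
        ENNReal.ofReal |y| *
        ENNReal.ofReal ((Set.Ioi 0).indicator (fun u => 1 / lam * Real.exp (-u / lam)) (t * y)) =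
      ENNReal.ofReal ((Set.Ioi 0).indicator (fun z => c * lam ^ p / z ^ (p + 1) *
        (lowerGamma (p + 1) (B * z / lam) - lowerGamma (p + 1) (A * z / lam))) t) := by
  rcases le_or_gt t 0 with ht | ht
  · rw [Set.indicator_of_notMem (Set.notMem_Ioi.2 ht), ofReal_zero]
    refine (lintegral_congr fun y => ?_).trans lintegral_zero
    by_cases hy : y ∈ Set.Icc A B
    · have hty : t * y ∉ Set.Ioi 0 :=
        Set.notMem_Ioi.2 (mul_nonpos_of_nonpos_of_nonneg ht (hA.le.trans hy.1))
      simp [Set.indicator_of_notMem hty]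
    · simp [Set.indicator_of_notMem hy]
  set g : ℝ → ℝ := fun y => c / lam * (y ^ (p + 1 - 1) * Real.exp (-(t / lam * y)))
  have hg : ∀ y, ENNReal.ofReal ((Set.Icc A B).indicator (fun z => c * z ^ (p - 1)) y) *
        ENNReal.ofReal |y| *
        ENNReal.ofReal ((Set.Ioi 0).indicator (fun u => 1 / lam * Real.exp (-u / lam)) (t * y)) =
      ENNReal.ofReal ((Set.Icc A B).indicator g y) := by
    intro y
    by_cases hy : y ∈ Set.Icc A B
    · have hy0 : 0 < y := hA.trans_le hy.1
      rw [Set.indicator_of_mem hy, Set.indicator_of_mem hy,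
        Set.indicator_of_mem (Set.mem_Ioi.2 (mul_pos ht hy0)), abs_of_pos hy0,
        ← ofReal_mul (by positivity), ← ofReal_mul (by positivity)]
      simp only [g, add_sub_cancel_right]
      rw [Real.rpow_sub_one hy0.ne', show -(t * y) / lam = -(t / lam * y) by ring]
      congr 1
      field_simp
    · simp [Set.indicator_of_notMem hy]
  have hg_cont : Continuous g := by
    have : 0 ≤ p + 1 - 1 := by linarith
    fun_prop
  have hg_nonneg : 0 ≤ (Set.Icc A B).indicator g := Set.indicator_nonneg fun y hy => by
    have := Real.rpow_nonneg (hA.le.trans hy.1) (p + 1 - 1)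
    positivity
  rw [lintegral_congr hg, ← ofReal_integral_eq_lintegral_ofReal
      (hg_cont.integrableOn_Icc.integrable_indicator measurableSet_Icc)
      (Filter.Eventually.of_forall hg_nonneg),
    integral_indicator measurableSet_Icc, integral_Icc_eq_integral_Ioc,
    ← intervalIntegral.integral_of_le hAB, intervalIntegral.integral_const_mul,
    intervalIntegral_rpow_mul_exp_neg_mul (by linarith) (by positivity) hA.le (hA.le.trans hAB),
    Set.indicator_of_mem (Set.mem_Ioi.2 ht), Real.div_rpow ht.le hlam.le,
    Real.rpow_add_one hlam.ne', mul_comm (t / lam) B, mul_comm (t / lam) A,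
    ← mul_div_assoc, ← mul_div_assoc]
  congr 1
  have := Real.rpow_pos_of_pos hlam p
  have := Real.rpow_pos_of_pos ht (p + 1)
  field_simp

/-- If `H ~ Exp(1/λ)` and `D` is independent with density
`(2/(α(R₂² − R₁²))) y^(2/α − 1)` on `[R₁^α, R₂^α]`, then `g = H/D` has density
`(2λ^(2/α)/(α(R₂² − R₁²) x^(2/α+1))) [γ(2/α+1, R₂^α x/λ) − γ(2/α+1, R₁^α x/λ)]` for `x > 0`. -/
theorem ratio_pdf_far {Ω : Type*} [MeasurableSpace Ω]
    (ℙ : Measure Ω) [IsProbabilityMeasure ℙ]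
    (R₁ R₂ α lam : ℝ) (hR₁ : 0 < R₁) (hR : R₁ < R₂) (hα : 0 < α) (hlam : 0 < lam)
    (H D : Ω → ℝ) (hH : Measurable H) (hD : Measurable D)
    (hindep : ProbabilityTheory.IndepFun H D ℙ)
    (hHpdf : Measure.map H ℙ =
      (volume : Measure ℝ).withDensity (fun h =>
        ENNReal.ofReal (Set.indicator (Set.Ioi 0)
          (fun t => (1 / lam) * Real.exp (-t / lam)) h)))
    (hDpdf : Measure.map D ℙ =
      (volume : Measure ℝ).withDensity (fun y =>
        ENNReal.ofReal (Set.indicator (Set.Icc (R₁ ^ α) (R₂ ^ α))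
          (fun z => 2 / (α * (R₂ ^ 2 - R₁ ^ 2)) * z ^ (2 / α - 1)) y))) :
    Measure.map (fun ω => H ω / D ω) ℙ =
      (volume : Measure ℝ).withDensity (fun x =>
        ENNReal.ofReal (Set.indicator (Set.Ioi 0)
          (fun z => 2 * lam ^ (2 / α) / (α * (R₂ ^ 2 - R₁ ^ 2) * z ^ (2 / α + 1)) *
            (lowerGamma (2 / α + 1) (R₂ ^ α * z / lam) -
              lowerGamma (2 / α + 1) (R₁ ^ α * z / lam))) x)) := by
  have hA : 0 < R₁ ^ α := Real.rpow_pos_of_pos hR₁ α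
  have hAB : R₁ ^ α ≤ R₂ ^ α := Real.rpow_le_rpow hR₁.le hR.le hα.le
  have hc : 0 ≤ 2 / (α * (R₂ ^ 2 - R₁ ^ 2)) :=
    div_nonneg zero_le_two (mul_nonneg hα.le (sub_nonneg.2 (pow_le_pow_left₀ hR₁.le hR.le 2)))
  rw [hindep.map_div_eq_withDensity hH.aemeasurable hD.aemeasurable
    ((Measurable.indicator (by fun_prop) measurableSet_Ioi).ennreal_ofReal)
    ((Measurable.indicator (by fun_prop) measurableSet_Icc).ennreal_ofReal) hHpdf hDpdf]
  congr 1
  funext x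
  rw [lintegral_powerDensity_mul_expDensity (by positivity) hlam hA hAB hc x]
  congr 3
  funext z
  congr 1
  rw [div_mul_eq_mul_div, div_div]
end

section
/- Let H be exponential with mean λ and D be independent with density f_D(y) = (2/(α R₁²)) y^{2/α − 1} on [0, R₁^α]. Then the cumulative distribution function of g = H/D satisfies F_g(x) = 1 − (2/(α R₁²)) (λ/x)^{2/α} γ(2/α, R₁^α x/λ) for all x > 0. -/
/-!
By independence, `P(H/D ≤ x) = ∫ P(H ≤ x y) f_D(y) dy = ∫₀^{R₁^α} f_D(y) (1 - e^{-xy/λ}) dy`.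
The constant term gives the total mass `1` of `f_D`, and the substitution `t = x y / λ` turns the
exponential term into `(2/(α R₁²)) (λ/x)^{2/α} γ(2/α, R₁^α x/λ)`.
-/

open MeasureTheory

open Real Set

namespace ProbabilityTheory

theorem IndepFun.measure_setOf_eq_lintegral
    {Ω α β : Type*} [MeasurableSpace Ω] [MeasurableSpace α] [MeasurableSpace β]
    {μ : Measure Ω} [IsFiniteMeasure μ] {X : Ω → α} {Y : Ω → β}
    (hXY : IndepFun X Y μ) (hX : Measurable X) (hY : Measurable Y)
    {p : α → β → Prop} (hp : MeasurableSet {z : α × β | p z.1 z.2}) :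
    μ {ω | p (X ω) (Y ω)} = ∫⁻ y, μ.map X {x | p x y} ∂μ.map Y := by
  calc μ {ω | p (X ω) (Y ω)} = μ.map (fun ω => (X ω, Y ω)) {z | p z.1 z.2} :=
        (Measure.map_apply (hX.prodMk hY) hp).symm
    _ = _ := by
      rw [(indepFun_iff_map_prod_eq_prod_map_map hX.aemeasurable hY.aemeasurable).mp hXY,
        Measure.prod_apply_symm hp]
      rfl

lemma withDensity_indicator_exp_eq_expMeasure (lam : ℝ) :
    volume.withDensity (fun h => ENNReal.ofReal
      ((Ioi 0).indicator (fun t => 1 / lam * exp (-t / lam)) h)) = expMeasure lam⁻¹ := by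
  refine withDensity_congr_ae ?_
  filter_upwards [Measure.ae_ne volume 0] with t ht
  change _ = exponentialPDF lam⁻¹ t
  rw [exponentialPDF_eq]
  rcases ht.lt_or_gt with ht | ht
  · simp [ht.not_gt, ht.not_ge]
  · simp [ht, ht.le, div_eq_inv_mul]

lemma expMeasure_Iic {r t : ℝ} (hr : 0 < r) (ht : 0 ≤ t) :
    expMeasure r (Iic t) = ENNReal.ofReal (1 - exp (-(r * t))) := by
  have := isProbabilityMeasure_expMeasure hr
  rw [← ofReal_cdf, cdf_expMeasure_eq hr, if_pos ht]

lemma expMeasure_div_le {r x y : ℝ} (hr : 0 < r) (hx : 0 ≤ x) (hy : 0 < y) :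
    expMeasure r {h | h / y ≤ x} = ENNReal.ofReal (1 - exp (-(r * x * y))) := by
  have hset : {h | h / y ≤ x} = Iic (x * y) := by
    ext h
    simp [div_le_iff₀ hy]
  rw [hset, expMeasure_Iic hr (mul_nonneg hx hy.le), mul_assoc]

end ProbabilityTheory

-- `Ioc` rather than `Icc`: the fibre `y = 0`, where `h / 0 = 0`, is null.
lemma lintegral_withDensity_indicator_Icc {φ : ℝ → ℝ} (hφ : Measurable φ) (B : ℝ)
    (g : ℝ → ENNReal) :
    ∫⁻ y, g y ∂volume.withDensity (fun y => ENNReal.ofReal ((Icc 0 B).indicator φ y))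
      = ∫⁻ y in Ioc 0 B, ENNReal.ofReal (φ y) * g y := by
  have hdens : Measurable fun y => ENNReal.ofReal ((Icc 0 B).indicator φ y) :=
    (hφ.indicator measurableSet_Icc).ennreal_ofReal
  rw [lintegral_withDensity_eq_lintegral_mul_non_measurable _ hdens
      (ae_of_all _ fun _ => ENNReal.ofReal_lt_top),
    setLIntegral_congr Ioc_ae_eq_Icc, ← lintegral_indicator measurableSet_Icc]
  congr 1
  funext y
  by_cases hy : y ∈ Icc 0 B <;> simp [hy]

lemma integral_rpow_sub_one {a : ℝ} (ha : 0 < a) (B : ℝ) :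
    ∫ y in (0 : ℝ)..B, y ^ (a - 1) = B ^ a / a := by
  rw [integral_rpow (Or.inl (by linarith))]
  simp [Real.zero_rpow ha.ne']

lemma integral_rpow_sub_one_mul_exp_neg_mul (a : ℝ) {B k : ℝ} (hB : 0 ≤ B) (hk : 0 < k) :
    ∫ y in (0 : ℝ)..B, y ^ (a - 1) * exp (-(k * y)) = k ^ (-a) * lowerGamma a (k * B) := by
  have hscale : ∀ y ∈ uIcc 0 B, y ^ (a - 1) * exp (-(k * y))
      = k ^ (1 - a) * ((k * y) ^ (a - 1) * exp (-(k * y))) := by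
    intro y hy
    rw [uIcc_of_le hB] at hy
    rw [mul_rpow hk.le hy.1, ← mul_assoc, ← mul_assoc, ← rpow_add hk]
    simp
  rw [intervalIntegral.integral_congr hscale, intervalIntegral.integral_const_mul,
    intervalIntegral.integral_comp_mul_left (fun t => t ^ (a - 1) * exp (-t)) hk.ne', mul_zero,
    lowerGamma, ← intervalIntegral.integral_of_le (by positivity), smul_eq_mul, ← mul_assoc,
    ← rpow_neg_one, ← rpow_add hk, show 1 - a + -1 = -a by ring]

lemma setLIntegral_rpow_sub_one_mul_one_sub_exp {a B k : ℝ} (ha : 0 < a) (hB : 0 ≤ B)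
    (hk : 0 < k) :
    ∫⁻ y in Ioc 0 B, ENNReal.ofReal (y ^ (a - 1) * (1 - exp (-(k * y))))
      = ENNReal.ofReal (B ^ a / a - k ^ (-a) * lowerGamma a (k * B)) := by
  have hpow : IntervalIntegrable (fun y : ℝ => y ^ (a - 1)) volume 0 B :=
    intervalIntegral.intervalIntegrable_rpow' (by linarith)
  have hexp : IntervalIntegrable (fun y : ℝ => y ^ (a - 1) * exp (-(k * y))) volume 0 B :=
    hpow.mul_continuousOn (by fun_prop)
  have hint :
      IntervalIntegrable (fun y : ℝ => y ^ (a - 1) * (1 - exp (-(k * y)))) volume 0 B := by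
    simpa only [mul_sub, mul_one] using hpow.sub hexp
  rw [← ofReal_integral_eq_lintegral_ofReal
      ((intervalIntegrable_iff_integrableOn_Ioc_of_le hB).mp hint),
    ← intervalIntegral.integral_of_le hB]
  · simp only [mul_sub, mul_one]
    rw [intervalIntegral.integral_sub hpow hexp, integral_rpow_sub_one ha,
      integral_rpow_sub_one_mul_exp_neg_mul a hB hk]
  · filter_upwards [ae_restrict_mem measurableSet_Ioc] with y hy
    have : exp (-(k * y)) ≤ 1 := exp_le_one_iff.mpr (by nlinarith [hy.1])
    exact mul_nonneg (rpow_nonneg hy.1.le _) (by linarith)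

-- `2 / (α R²) · y^(2/α - 1)` has total mass one on `[0, R^α]`.
lemma two_div_mul_rpow_two_div_div {α R : ℝ} (hα : 0 < α) (hR : 0 < R) :
    2 / (α * R ^ 2) * ((R ^ α) ^ (2 / α) / (2 / α)) = 1 := by
  rw [← rpow_mul hR.le, mul_div_cancel₀ _ hα.ne', rpow_two]
  field_simp

/-- If `H ~ Exp(1/λ)` and `D` is independent with density `(2/(α R₁²)) y^(2/α − 1)` on
`[0, R₁^α]`, then the CDF of `g = H/D` satisfies
`F_g(x) = 1 − (2/(α R₁²)) (λ/x)^(2/α) γ(2/α, R₁^α x/λ)` for all `x > 0`. -/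
theorem ratio_cdf_near {Ω : Type*} [MeasurableSpace Ω]
    (ℙ : Measure Ω) [IsProbabilityMeasure ℙ]
    (R₁ α lam : ℝ) (hR₁ : 0 < R₁) (hα : 0 < α) (hlam : 0 < lam)
    (H D : Ω → ℝ) (hH : Measurable H) (hD : Measurable D)
    (hindep : ProbabilityTheory.IndepFun H D ℙ)
    (hHpdf : Measure.map H ℙ =
      (volume : Measure ℝ).withDensity (fun h =>
        ENNReal.ofReal (Set.indicator (Set.Ioi 0)
          (fun t => (1 / lam) * Real.exp (-t / lam)) h)))
    (hDpdf : Measure.map D ℙ =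
      (volume : Measure ℝ).withDensity (fun y =>
        ENNReal.ofReal (Set.indicator (Set.Icc 0 (R₁ ^ α))
          (fun z => 2 / (α * R₁ ^ 2) * z ^ (2 / α - 1)) y))) :
    ∀ x : ℝ, 0 < x →
      ℙ {ω | H ω / D ω ≤ x} =
        ENNReal.ofReal (1 - 2 / (α * R₁ ^ 2) * (lam / x) ^ (2 / α) *
          lowerGamma (2 / α) (R₁ ^ α * x / lam)) := by
  intro x hx
  set c := 2 / (α * R₁ ^ 2)
  set a := 2 / α
  set B := R₁ ^ α
  have hS : MeasurableSet {p : ℝ × ℝ | p.1 / p.2 ≤ x} :=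
    measurableSet_le (measurable_fst.div measurable_snd) measurable_const
  have hfiber : ∀ y ∈ Ioc 0 B, ENNReal.ofReal (c * y ^ (a - 1)) *
      ProbabilityTheory.expMeasure lam⁻¹ {h | h / y ≤ x}
        = ENNReal.ofReal c * ENNReal.ofReal (y ^ (a - 1) * (1 - exp (-(lam⁻¹ * x * y)))) := by
    intro y hy
    have hpow : 0 ≤ y ^ (a - 1) := rpow_nonneg hy.1.le _
    rw [ProbabilityTheory.expMeasure_div_le (inv_pos.mpr hlam) hx.le hy.1,
      ← ENNReal.ofReal_mul (by positivity), ← ENNReal.ofReal_mul (by positivity), mul_assoc]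
  have hrate : (lam⁻¹ * x) ^ (-a) = (lam / x) ^ a := by
    rw [rpow_neg (by positivity), ← inv_rpow (by positivity), mul_inv, inv_inv, div_eq_mul_inv]
  rw [hindep.measure_setOf_eq_lintegral (p := fun h y => h / y ≤ x) hH hD hS, hDpdf,
    lintegral_withDensity_indicator_Icc (by fun_prop), hHpdf,
    ProbabilityTheory.withDensity_indicator_exp_eq_expMeasure,
    setLIntegral_congr_fun measurableSet_Ioc hfiber, lintegral_const_mul' _ _ ENNReal.ofReal_ne_top,
    setLIntegral_rpow_sub_one_mul_one_sub_exp (by positivity) (by positivity) (by positivity),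
    ← ENNReal.ofReal_mul (by positivity), mul_sub, two_div_mul_rpow_two_div_div hα hR₁, hrate,
    show lam⁻¹ * x * B = B * x / lam by ring]
  congr 1
  ring
end

section
/- For real t > 0, α > 0, β > 0, δ > 0, the integral M(t, α, β, δ) := ∫₀^t x^{α−1} γ(β, δx) dx equals (t^{α+β} δ^β / β) · B(1, α+β) · ₂F₂(β, α+β; β+1, α+β+1; −tδ), where B is the Beta function and ₂F₂ the generalized hypergeometric function. -/
/-- The Pochhammer symbol (rising factorial) `(x)_k = x(x+1)⋯(x+k−1)`. -/
noncomputable def poch (x : ℝ) (k : ℕ) : ℝ := ∏ i ∈ Finset.range k, (x + i)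

/-- The generalized hypergeometric function `₂F₂(a₁,a₂;b₁,b₂;z)`. -/
noncomputable def F22 (a₁ a₂ b₁ b₂ z : ℝ) : ℝ :=
  ∑' k : ℕ, poch a₁ k * poch a₂ k / (poch b₁ k * poch b₂ k * (k.factorial : ℝ)) * z ^ k

/-!
Integrating the exponential series term by term gives
`γ(β, y) = ∑ₖ (-1)ᵏ y^(β+k) / (k! (β+k))`, so `x^(α-1) γ(β, δx)` is a series of powers
`x^(α+β+k-1)`, which can be integrated term by term once more over `(0, t]`; both interchanges
are justified by summability of the integrals of the absolute values. Since
`(a)ₖ / (a+1)ₖ = a / (a+k)`, the resulting coefficients are exactly those of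
`₂F₂(β, α+β; β+1, α+β+1; -tδ)`.
-/

open MeasureTheory Real Set
open scoped Nat

lemma integral_Ioc_rpow_sub_one {p y : ℝ} (hp : 0 < p) (hy : 0 ≤ y) :
    ∫ s in Ioc 0 y, s ^ (p - 1) = y ^ p / p := by
  rw [← intervalIntegral.integral_of_le hy, integral_rpow (Or.inl (by linarith)),
    zero_rpow (by linarith), sub_zero, sub_add_cancel]

lemma integrableOn_Ioc_rpow_sub_one {p y : ℝ} (hp : 0 < p) (hy : 0 ≤ y) :
    IntegrableOn (fun s : ℝ => s ^ (p - 1)) (Ioc 0 y) :=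
  (intervalIntegrable_iff_integrableOn_Ioc_of_le hy).1
    (intervalIntegral.intervalIntegrable_rpow' (by linarith))

theorem integral_Ioc_tsum_mul_rpow {p y : ℝ} (hp : 0 < p) (hy : 0 ≤ y) {a : ℕ → ℝ}
    (ha : Summable fun k => |a k| * y ^ k) :
    ∫ s in Ioc 0 y, ∑' k : ℕ, a k * s ^ (p + k - 1) =
      ∑' k : ℕ, a k * (y ^ (p + k) / (p + k)) := by
  have hpk (k : ℕ) : 0 < p + k := by positivity
  have hint (k : ℕ) : IntegrableOn (fun s => a k * s ^ (p + k - 1)) (Ioc 0 y) :=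
    (integrableOn_Ioc_rpow_sub_one (hpk k) hy).const_mul _
  have hnorm (k : ℕ) :
      ∫ s in Ioc 0 y, ‖a k * s ^ (p + k - 1)‖ = |a k| * (y ^ (p + k) / (p + k)) := by
    rw [← integral_Ioc_rpow_sub_one (hpk k) hy, ← integral_const_mul]
    refine setIntegral_congr_fun measurableSet_Ioc fun s hs => ?_
    rw [norm_mul, norm_of_nonneg (rpow_nonneg hs.1.le _), Real.norm_eq_abs]
  have hsum : Summable fun k => ∫ s in Ioc 0 y, ‖a k * s ^ (p + k - 1)‖ := by
    refine (ha.mul_left (y ^ p / p)).of_nonneg_of_le (fun k => by rw [hnorm]; positivity)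
      fun k => ?_
    calc ∫ s in Ioc 0 y, ‖a k * s ^ (p + k - 1)‖ = y ^ p * (|a k| * y ^ k) / (p + k) := by
          rw [hnorm, rpow_add_natCast' hy (hpk k).ne']; ring
      _ ≤ y ^ p * (|a k| * y ^ k) / p := by
          gcongr; exact le_add_of_nonneg_right k.cast_nonneg
      _ = y ^ p / p * (|a k| * y ^ k) := by ring
  rw [← integral_tsum_of_summable_integral_norm hint hsum]
  refine tsum_congr fun k => ?_
  rw [integral_const_mul, integral_Ioc_rpow_sub_one (hpk k) hy]

theorem lowerGamma_eq_tsum {β y : ℝ} (hβ : 0 < β) (hy : 0 ≤ y) :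
    lowerGamma β y = ∑' k : ℕ, (-1) ^ k / k ! * (y ^ (β + k) / (β + k)) := by
  have hexp : ∀ s ∈ Ioc 0 y,
      s ^ (β - 1) * exp (-s) = ∑' k : ℕ, (-1) ^ k / k ! * s ^ (β + k - 1) := by
    intro s hs
    rw [exp_eq_exp_ℝ, NormedSpace.exp_eq_tsum_div, ← tsum_mul_left]
    refine tsum_congr fun k => ?_
    rw [add_sub_right_comm, rpow_add_natCast hs.1.ne', neg_pow]
    ring
  rw [lowerGamma, setIntegral_congr_fun measurableSet_Ioc hexp]
  refine integral_Ioc_tsum_mul_rpow hβ hy ?_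
  simpa [abs_div, inv_mul_eq_div] using summable_pow_div_factorial y

lemma poch_mul_add (x : ℝ) (k : ℕ) : poch x k * (x + k) = x * poch (x + 1) k := by
  rw [poch, ← Finset.prod_range_succ, Finset.prod_range_succ', poch, mul_comm]
  simp only [Nat.cast_add, Nat.cast_one, Nat.cast_zero, add_zero]
  congr 1
  exact Finset.prod_congr rfl fun i _ => by ring

lemma poch_div_poch_add_one {x : ℝ} (hx : 0 < x) (k : ℕ) :
    poch x k / poch (x + 1) k = x / (x + k) := by
  have : poch (x + 1) k ≠ 0 := Finset.prod_ne_zero_iff.2 fun i _ => by positivity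
  rw [div_eq_div_iff this (by positivity), poch_mul_add]

theorem F22_add_one_add_one_eq_tsum {a b : ℝ} (ha : 0 < a) (hb : 0 < b) (z : ℝ) :
    F22 a b (a + 1) (b + 1) z = ∑' k : ℕ, a / (a + k) * (b / (b + k)) * (z ^ k / k !) := by
  refine tsum_congr fun k => ?_
  rw [← poch_div_poch_add_one ha, ← poch_div_poch_add_one hb]
  ring

/-- `M(t,α,β,δ) := ∫₀ᵗ x^(α−1) γ(β, δx) dx
  = (t^(α+β) δ^β / β) B(1, α+β) ₂F₂(β, α+β; β+1, α+β+1; −tδ)`,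
where `B(1, α+β) = 1/(α+β)`. -/
theorem integral_rpow_mul_lowerGamma (t α β δ : ℝ)
    (ht : 0 < t) (hα : 0 < α) (hβ : 0 < β) (hδ : 0 < δ) :
    ∫ x in Set.Ioc (0 : ℝ) t, x ^ (α - 1) * lowerGamma β (δ * x) =
      (t ^ (α + β) * δ ^ β / β) * (1 / (α + β)) *
        F22 β (α + β) (β + 1) (α + β + 1) (-(t * δ)) := by
  set a : ℕ → ℝ := fun k => δ ^ β / (β + k) * ((-δ) ^ k / k !)
  have hexpand : ∀ x ∈ Ioc 0 t,
      x ^ (α - 1) * lowerGamma β (δ * x) = ∑' k : ℕ, a k * x ^ (α + β + k - 1) := by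
    intro x hx
    rw [lowerGamma_eq_tsum hβ (mul_pos hδ hx.1).le, ← tsum_mul_left]
    refine tsum_congr fun k => ?_
    rw [mul_rpow hδ.le hx.1.le, rpow_add_natCast hδ.ne',
      show α + β + k - 1 = α - 1 + (β + k) by ring, rpow_add hx.1 (α - 1), neg_pow]
    ring
  have hsum : Summable fun k => |a k| * t ^ k := by
    refine ((summable_pow_div_factorial (δ * t)).mul_left (δ ^ β / β)).of_nonneg_of_le
      (fun k => by positivity) fun k => ?_
    calc |a k| * t ^ k = δ ^ β / (β + k) * ((δ * t) ^ k / k !) := by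
          simp only [a, abs_mul, abs_div, abs_pow, abs_neg, abs_of_pos hδ, Nat.abs_cast,
            abs_of_pos (rpow_pos_of_pos hδ β), abs_of_pos (by positivity : 0 < β + k)]
          ring
      _ ≤ δ ^ β / β * ((δ * t) ^ k / k !) := by
          gcongr; exact le_add_of_nonneg_right k.cast_nonneg
  rw [setIntegral_congr_fun measurableSet_Ioc hexpand,
    integral_Ioc_tsum_mul_rpow (by positivity) ht.le hsum,
    F22_add_one_add_one_eq_tsum hβ (by positivity), ← tsum_mul_left]
  refine tsum_congr fun k => ?_
  simp only [a]
  rw [rpow_add_natCast ht.ne', neg_mul_eq_mul_neg, mul_pow]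
  field_simp
end
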